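/- The anisotropic perimeter generating function B(x,y) of bargraphs satisfies B = yB + xy + xB + xyB + xB^2, and consequently B(x,y) = (1 - x - y - xy - sqrt((1-y)((1-x)^2 - y(1+x)^2)))/(2x) as a formal power series. -/

import Mathlib

/-- Half the vertical perimeter of a bargraph whose column heights follow the
previous column of height `prev`: `h₁ + Σ_{i≥2} max(hᵢ - hᵢ₋₁, 0)`
(truncated subtraction on `ℕ`). -/
def vhalf : ℕ → List ℕ → ℕ
  | _, [] => 0
  | prev, h :: t => (h - prev) + vhalf h t

/-- The anisotropic perimeter generating function `B(x,y)` of bargraphs: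
a bargraph is a nonempty list of positive column heights, `x = X 0` marks half the
horizontal perimeter (the width) and `y = X 1` marks half the vertical perimeter. -/
noncomputable def bargraphGF : MvPowerSeries (Fin 2) ℚ :=
  fun d => (Set.ncard {l : List ℕ | l ≠ [] ∧ (∀ x ∈ l, 0 < x) ∧
    l.length = d 0 ∧ vhalf 0 l = d 1} : ℚ)

/-!
Cut a bargraph at its first column of height one. If there is none, lowering every column by one
leaves a bargraph with one unit less of vertical half-perimeter: the term `yB`. Otherwise the
bargraph is `c + 1, 1, t` with `c`, `t` arbitrary (possibly empty) sequences of positive heights,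
and its weight is `xy` times the weight of `c` read after a column of height `0` times that of `t`
read after a column of height `1`. These two factors are `1 + B` and `1 + B / y`, so
`B = yB + x (1 + B) (y + B)`; the second claim is this quadratic in `B` with the square
completed.
-/

open MvPowerSeries

theorem List.append_cons_injective_of_notMem {α : Type*} {a : α} :
    ∀ {s s' t t' : List α}, a ∉ s → a ∉ s' → s ++ a :: t = s' ++ a :: t' → s = s' ∧ t = t'
  | [], [], _, _, _, _, h => by simpa using h
  | [], _ :: _, _, _, _, hs', h => by
    simp only [List.nil_append, List.cons_append, List.cons.injEq] at h
    exact absurd (h.1 ▸ List.mem_cons_self) hs'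
  | _ :: _, [], _, _, hs, _, h => by
    simp only [List.nil_append, List.cons_append, List.cons.injEq] at h
    exact absurd (h.1 ▸ List.mem_cons_self) hs
  | _ :: _, _ :: _, _, _, hs, hs', h => by
    simp only [List.cons_append, List.cons.injEq] at h
    obtain ⟨rfl, h⟩ := h
    obtain ⟨rfl, rfl⟩ := List.append_cons_injective_of_notMem (mt (List.mem_cons_of_mem _) hs)
      (mt (List.mem_cons_of_mem _) hs') h
    exact ⟨rfl, rfl⟩

section WeightGF

variable {α β σ R : Type*} [Semiring R]

-- Meaningful only when the fibres `s ∩ w ⁻¹' {d}` are finite: `Set.ncard` of an infinite set is `0`.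
noncomputable def weightGF (w : α → σ →₀ ℕ) (s : Set α) : MvPowerSeries σ R :=
  fun d => ((s ∩ w ⁻¹' {d}).ncard : R)

theorem coeff_weightGF (w : α → σ →₀ ℕ) (s : Set α) (d : σ →₀ ℕ) :
    coeff d (weightGF w s : MvPowerSeries σ R) = (s ∩ w ⁻¹' {d}).ncard :=
  rfl

theorem weightGF_union {w : α → σ →₀ ℕ} {s t : Set α} (hst : Disjoint s t)
    (hs : ∀ d, (s ∩ w ⁻¹' {d}).Finite) (ht : ∀ d, (t ∩ w ⁻¹' {d}).Finite) :
    (weightGF w (s ∪ t) : MvPowerSeries σ R) = weightGF w s + weightGF w t := by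
  ext d
  rw [map_add, coeff_weightGF, coeff_weightGF, coeff_weightGF, Set.union_inter_distrib_right,
    Set.ncard_union_eq (hst.mono Set.inter_subset_left Set.inter_subset_left) (hs d) (ht d),
    Nat.cast_add]

theorem weightGF_singleton (w : α → σ →₀ ℕ) (a : α) :
    (weightGF w {a} : MvPowerSeries σ R) = monomial (w a) 1 := by
  classical
  ext d
  rw [coeff_weightGF, coeff_monomial]
  split_ifs with h
  · simp [h]
  · simp [Ne.symm h]

theorem weightGF_image {w : α → σ →₀ ℕ} {w' : β → σ →₀ ℕ} {s : Set α} {f : α → β}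
    (e : σ →₀ ℕ) (hf : Set.InjOn f s) (hw : ∀ a ∈ s, w' (f a) = e + w a) :
    (weightGF w' (f '' s) : MvPowerSeries σ R) = monomial e 1 * weightGF w s := by
  ext d
  rw [coeff_monomial_mul, one_mul, coeff_weightGF, ← Set.image_inter_preimage,
    (hf.mono Set.inter_subset_left).ncard_image]
  split_ifs with he
  · rw [coeff_weightGF]
    congr 2
    refine Set.ext fun a => and_congr_right fun ha => ?_
    simp only [Set.mem_preimage, Set.mem_singleton_iff, hw a ha, eq_tsub_iff_add_eq_of_le he,
      add_comm e]
  · have hempty : s ∩ f ⁻¹' (w' ⁻¹' {d}) = ∅ := by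
      refine Set.eq_empty_of_forall_notMem fun a ⟨ha, hd⟩ => he ?_
      simp only [Set.mem_preimage, Set.mem_singleton_iff, hw a ha] at hd
      exact hd ▸ le_self_add
    rw [hempty, Set.ncard_empty, Nat.cast_zero]

theorem weightGF_prod {w : α → σ →₀ ℕ} {w' : β → σ →₀ ℕ} {s : Set α} {t : Set β}
    (hs : ∀ d, (s ∩ w ⁻¹' {d}).Finite) (ht : ∀ d, (t ∩ w' ⁻¹' {d}).Finite) :
    (weightGF (fun p : α × β => w p.1 + w' p.2) (s ×ˢ t) : MvPowerSeries σ R) =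
      weightGF w s * weightGF w' t := by
  classical
  ext d
  set F : (σ →₀ ℕ) × (σ →₀ ℕ) → Set (α × β) := fun ij =>
    (s ∩ w ⁻¹' {ij.1}) ×ˢ (t ∩ w' ⁻¹' {ij.2})
  have hfibre : s ×ˢ t ∩ (fun p : α × β => w p.1 + w' p.2) ⁻¹' {d} =
      ⋃ ij ∈ (Finset.HasAntidiagonal.antidiagonal d : Set _), F ij := by
    ext ⟨a, b⟩
    simp only [F, Set.mem_iUnion, Set.mem_prod, Set.mem_inter_iff, Set.mem_preimage,
      Set.mem_singleton_iff, Finset.mem_coe, Finset.HasAntidiagonal.mem_antidiagonal,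
      exists_prop, Prod.exists]
    constructor
    · rintro ⟨⟨ha, hb⟩, hd⟩
      exact ⟨_, _, hd, ⟨ha, rfl⟩, hb, rfl⟩
    · rintro ⟨_, _, hd, ⟨ha, rfl⟩, hb, rfl⟩
      exact ⟨⟨ha, hb⟩, hd⟩
  have hdisj : (Finset.HasAntidiagonal.antidiagonal d : Set _).PairwiseDisjoint F := by
    rintro ij - kl - hne
    refine Set.disjoint_left.mpr fun ab hij hkl => hne ?_
    simp only [F, Set.mem_prod, Set.mem_inter_iff, Set.mem_preimage, Set.mem_singleton_iff]
      at hij hkl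
    exact Prod.ext (hij.1.2.symm.trans hkl.1.2) (hij.2.2.symm.trans hkl.2.2)
  rw [coeff_mul, coeff_weightGF, hfibre,
    (Finset.finite_toSet _).ncard_biUnion (fun _ _ => (hs _).prod (ht _)) hdisj,
    finsum_mem_coe_finset, Nat.cast_sum]
  simp only [Set.ncard_prod, Nat.cast_mul, coeff_weightGF]

end WeightGF

noncomputable def perimeterWeight (p : ℕ) (l : List ℕ) : Fin 2 →₀ ℕ :=
  Finsupp.single 0 l.length + Finsupp.single 1 (vhalf p l)

def positiveLists : Set (List ℕ) := {l | ∀ x ∈ l, 0 < x}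

def bargraphs : Set (List ℕ) := {l | l ≠ [] ∧ ∀ x ∈ l, 0 < x}

theorem perimeterWeight_eq_iff {p : ℕ} {l : List ℕ} {d : Fin 2 →₀ ℕ} :
    perimeterWeight p l = d ↔ l.length = d 0 ∧ vhalf p l = d 1 := by
  simp [perimeterWeight, Finsupp.ext_iff, Fin.forall_fin_two, eq_comm]

theorem bargraphGF_eq_weightGF : bargraphGF = weightGF (perimeterWeight 0) bargraphs := by
  ext d
  rw [coeff_weightGF]
  exact congrArg (fun s : Set (List ℕ) => (s.ncard : ℚ))
    (Set.ext fun l => by simp [bargraphs, perimeterWeight_eq_iff, and_assoc])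

theorem le_add_vhalf_of_mem : ∀ {p x : ℕ} {l : List ℕ}, x ∈ l → x ≤ p + vhalf p l
  | _, _, [], hx => absurd hx List.not_mem_nil
  | p, x, h :: t, hx => by
    rcases List.mem_cons.mp hx with rfl | hx
    · simp only [vhalf]; omega
    · have := le_add_vhalf_of_mem (p := h) hx
      simp only [vhalf]; omega

theorem finite_setOf_length_eq_forall_le (n b : ℕ) :
    {l : List ℕ | l.length = n ∧ ∀ x ∈ l, x ≤ b}.Finite := by
  refine (Set.finite_range fun f : Fin n → Fin (b + 1) => List.ofFn fun i => (f i : ℕ)).subset ?_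
  rintro l ⟨rfl, hl⟩
  exact ⟨fun i => ⟨l[i], Nat.lt_succ_of_le (hl _ (List.getElem_mem _))⟩, List.ofFn_getElem⟩

theorem finite_inter_perimeterWeight_fibre (s : Set (List ℕ)) (p : ℕ) (d : Fin 2 →₀ ℕ) :
    (s ∩ perimeterWeight p ⁻¹' {d}).Finite := by
  refine (finite_setOf_length_eq_forall_le (d 0) (p + d 1)).subset fun l hl => ?_
  obtain ⟨hlen, hv⟩ := perimeterWeight_eq_iff.mp hl.2
  exact ⟨hlen, fun x hx => hv ▸ le_add_vhalf_of_mem hx⟩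

theorem vhalf_succ_map_add_one (p : ℕ) : ∀ l : List ℕ, vhalf (p + 1) (l.map (· + 1)) = vhalf p l
  | [] => rfl
  | h :: t => by simp only [List.map_cons, vhalf, vhalf_succ_map_add_one h t, Nat.add_sub_add_right]

theorem vhalf_zero_map_add_one {l : List ℕ} (hl : l ≠ []) :
    vhalf 0 (l.map (· + 1)) = vhalf 0 l + 1 := by
  obtain ⟨h, t, rfl⟩ := List.exists_cons_of_ne_nil hl
  simp only [List.map_cons, vhalf, vhalf_succ_map_add_one]
  omega

theorem vhalf_succ_map_add_one_append_one_cons (t : List ℕ) :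
    ∀ (p : ℕ) (c : List ℕ), vhalf (p + 1) (c.map (· + 1) ++ 1 :: t) = vhalf p c + vhalf 1 t
  | p, [] => by simp [vhalf]
  | p, h :: c => by
    simp only [List.map_cons, List.cons_append, vhalf,
      vhalf_succ_map_add_one_append_one_cons t h c]
    omega

theorem vhalf_zero_map_add_one_append_one_cons (c t : List ℕ) :
    vhalf 0 (c.map (· + 1) ++ 1 :: t) = vhalf 0 c + 1 + vhalf 1 t := by
  cases c with
  | nil => simp [vhalf]
  | cons h c =>
    simp only [List.map_cons, List.cons_append, vhalf, vhalf_succ_map_add_one_append_one_cons]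
    omega

theorem vhalf_zero_eq_vhalf_one_add_one {t : List ℕ} (ht : t ∈ bargraphs) :
    vhalf 0 t = vhalf 1 t + 1 := by
  obtain ⟨h, t, rfl⟩ := List.exists_cons_of_ne_nil ht.1
  have := ht.2 h List.mem_cons_self
  simp only [vhalf]
  omega

def spliceAtOne (ct : List ℕ × List ℕ) : List ℕ := ct.1.map (· + 1) ++ 1 :: ct.2

theorem one_notMem_map_add_one {c : List ℕ} (hc : c ∈ positiveLists) : 1 ∉ c.map (· + 1) := by
  simp only [List.mem_map, Nat.add_eq_right, not_exists, not_and]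
  exact fun x hx => (hc x hx).ne'

theorem spliceAtOne_injOn : Set.InjOn spliceAtOne (positiveLists ×ˢ positiveLists) := by
  rintro ⟨c, t⟩ ⟨hc : c ∈ positiveLists, -⟩ ⟨c', t'⟩ ⟨hc' : c' ∈ positiveLists, -⟩ h
  obtain ⟨hcc, rfl⟩ := List.append_cons_injective_of_notMem (one_notMem_map_add_one hc)
    (one_notMem_map_add_one hc') h
  rw [List.map_injective_iff.mpr (add_left_injective 1) hcc]

theorem exists_map_add_one_eq {l : List ℕ} (hl : l ∈ positiveLists) (h1 : 1 ∉ l) :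
    ∃ c ∈ positiveLists, c.map (· + 1) = l := by
  have h2 : ∀ x ∈ l, 2 ≤ x := fun x hx => by
    have := hl x hx
    have : x ≠ 1 := by rintro rfl; exact h1 hx
    omega
  refine ⟨l.map (· - 1), fun y hy => ?_, ?_⟩
  · obtain ⟨x, hx, rfl⟩ := List.mem_map.mp hy
    have := h2 x hx
    omega
  · rw [List.map_map]
    conv_rhs => rw [← List.map_id l]
    exact List.map_congr_left fun x hx => by have := h2 x hx; simp only [Function.comp, id]; omega

theorem bargraphs_eq_union :
    bargraphs = List.map (· + 1) '' bargraphs ∪ spliceAtOne '' (positiveLists ×ˢ positiveLists) := by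
  ext l
  constructor
  · rintro ⟨hne, hpos⟩
    by_cases h1 : 1 ∈ l
    · right
      obtain ⟨b, t, rfl, hb⟩ := List.eq_append_cons_of_mem h1
      obtain ⟨c, hc, rfl⟩ :=
        exists_map_add_one_eq (fun x hx => hpos x (List.mem_append_left _ hx)) hb
      exact ⟨(c, t), ⟨hc, fun x hx => hpos x (by simp [hx])⟩, rfl⟩
    · left
      obtain ⟨c, hc, rfl⟩ := exists_map_add_one_eq hpos h1
      exact ⟨c, ⟨by simpa using hne, hc⟩, rfl⟩
  · rintro (⟨c, ⟨hne, -⟩, rfl⟩ | ⟨⟨c, t⟩, ⟨-, ht⟩, rfl⟩)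
    · exact ⟨by simpa using hne, by simp⟩
    · refine ⟨by simp [spliceAtOne], fun x hx => ?_⟩
      simp only [spliceAtOne, List.mem_append, List.mem_map, List.mem_cons] at hx
      rcases hx with ⟨y, -, rfl⟩ | rfl | hx
      exacts [y.succ_pos, one_pos, ht x hx]

theorem disjoint_image_map_add_one_image_spliceAtOne :
    Disjoint (List.map (· + 1) '' bargraphs) (spliceAtOne '' (positiveLists ×ˢ positiveLists)) := by
  rw [Set.disjoint_left]
  rintro _ ⟨c, hc, rfl⟩ ⟨_, -, h⟩
  exact one_notMem_map_add_one hc.2 (h ▸ by simp [spliceAtOne])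

theorem perimeterWeight_zero_map_add_one {c : List ℕ} (hc : c ≠ []) :
    perimeterWeight 0 (c.map (· + 1)) = Finsupp.single 1 1 + perimeterWeight 0 c := by
  ext i
  fin_cases i <;> simp [perimeterWeight, vhalf_zero_map_add_one hc, add_comm]

theorem perimeterWeight_zero_spliceAtOne (ct : List ℕ × List ℕ) :
    perimeterWeight 0 (spliceAtOne ct) =
      Finsupp.single 0 1 + Finsupp.single 1 1 + (perimeterWeight 0 ct.1 + perimeterWeight 1 ct.2) := by
  ext i
  fin_cases i <;> simp [perimeterWeight, spliceAtOne, vhalf_zero_map_add_one_append_one_cons] <;> omega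

theorem perimeterWeight_zero_of_mem_bargraphs {t : List ℕ} (ht : t ∈ bargraphs) :
    perimeterWeight 0 t = Finsupp.single 1 1 + perimeterWeight 1 t := by
  ext i
  fin_cases i <;> simp [perimeterWeight, vhalf_zero_eq_vhalf_one_add_one ht, add_comm]

section

variable {R : Type*} [Semiring R]

theorem weightGF_positiveLists (p : ℕ) :
    (weightGF (perimeterWeight p) positiveLists : MvPowerSeries (Fin 2) R) =
      1 + weightGF (perimeterWeight p) bargraphs := by
  have hsplit : positiveLists = {[]} ∪ bargraphs := by
    ext l
    by_cases hl : l = [] <;> simp [positiveLists, bargraphs, hl]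
  rw [hsplit, weightGF_union (Set.disjoint_singleton_left.mpr fun h => h.1 rfl)
    (fun _ => Set.toFinite _) (finite_inter_perimeterWeight_fibre _ p), weightGF_singleton]
  simp [perimeterWeight, vhalf]

theorem X_one_mul_weightGF_one_bargraphs :
    X 1 * (weightGF (perimeterWeight 1) bargraphs : MvPowerSeries (Fin 2) R) =
      weightGF (perimeterWeight 0) bargraphs := by
  rw [X_def, ← weightGF_image (w := perimeterWeight 1) (f := id) _ (Set.injOn_id _)
    fun t ht => perimeterWeight_zero_of_mem_bargraphs ht, Set.image_id]

theorem weightGF_bargraphs :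
    (weightGF (perimeterWeight 0) bargraphs : MvPowerSeries (Fin 2) R) =
      X 1 * weightGF (perimeterWeight 0) bargraphs + X 0 * X 1 *
        (weightGF (perimeterWeight 0) positiveLists * weightGF (perimeterWeight 1) positiveLists) := by
  have hraise : (weightGF (perimeterWeight 0) (List.map (· + 1) '' bargraphs) :
      MvPowerSeries (Fin 2) R) = X 1 * weightGF (perimeterWeight 0) bargraphs := by
    rw [X_def]
    exact weightGF_image _ (List.map_injective_iff.mpr (add_left_injective 1)).injOn
      fun c hc => perimeterWeight_zero_map_add_one hc.1
  have hsplice : (weightGF (perimeterWeight 0) (spliceAtOne '' (positiveLists ×ˢ positiveLists)) :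
      MvPowerSeries (Fin 2) R) = X 0 * X 1 *
        (weightGF (perimeterWeight 0) positiveLists * weightGF (perimeterWeight 1) positiveLists) := by
    rw [← weightGF_prod (finite_inter_perimeterWeight_fibre _ 0) (finite_inter_perimeterWeight_fibre _ 1),
      X_def, X_def, monomial_mul_monomial, one_mul]
    exact weightGF_image _ spliceAtOne_injOn fun ct _ => perimeterWeight_zero_spliceAtOne ct
  conv_lhs => rw [bargraphs_eq_union]
  rw [weightGF_union disjoint_image_map_add_one_image_spliceAtOne
      (finite_inter_perimeterWeight_fibre _ 0) (finite_inter_perimeterWeight_fibre _ 0), hraise, hsplice]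

end

theorem bargraphGF_eq_X_one_mul_add_X_zero_mul :
    bargraphGF = X 1 * bargraphGF + X 0 * (1 + bargraphGF) * (X 1 + bargraphGF) := by
  have h := weightGF_bargraphs (R := ℚ)
  have hB1 := X_one_mul_weightGF_one_bargraphs (R := ℚ)
  rw [weightGF_positiveLists, weightGF_positiveLists, ← bargraphGF_eq_weightGF] at h
  rw [← bargraphGF_eq_weightGF] at hB1
  linear_combination h + X 0 * (1 + bargraphGF) * hB1

open MvPowerSeries in
/-- `B = yB + xy + xB + xyB + xB²`, and consequently
`B(x,y) = (1 - x - y - xy - √((1-y)((1-x)² - y(1+x)²)))/(2x)`,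
i.e. `(2xB - (1-x-y-xy))² = (1-y)((1-x)² - y(1+x)²)`. -/
theorem bargraph_perimeter_gf :
    (bargraphGF = X 1 * bargraphGF + X 0 * X 1 + X 0 * bargraphGF
        + X 0 * X 1 * bargraphGF + X 0 * bargraphGF ^ 2) ∧
    (2 * X 0 * bargraphGF - (1 - X 0 - X 1 - X 0 * X 1)) ^ 2
      = (1 - X 1) * ((1 - X 0) ^ 2 - X 1 * (1 + X 0) ^ 2) := by
  have hrec : bargraphGF = X 1 * bargraphGF + X 0 * X 1 + X 0 * bargraphGF
      + X 0 * X 1 * bargraphGF + X 0 * bargraphGF ^ 2 := by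
    linear_combination bargraphGF_eq_X_one_mul_add_X_zero_mul
  exact ⟨hrec, by linear_combination (-4 * X 0 : MvPowerSeries (Fin 2) ℚ) * hrec⟩
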